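/- arXiv:1509.07294 — 4 statements merged into one kernel-verified Lean document; each statement's English description precedes it below -/
import Mathlib

section
/- Let f be a positive semidefinite matrix in M_n(ℂ) with normalized trace τ(f) = (1/n) tr(f) = 1. Then the function g(p) = ‖f‖_p = (τ(f^p))^{1/p} (defined for p ≥ 1 using the normalized trace) is differentiable at p = 1 with g'(1) = τ(f log f). -/
open scoped BigOperators ComplexOrder

/-! The eigenvalues `μᵢ ≥ 0` of `f` average to `1`, so `F(p) = τ(f^p) = (1/n) ∑ μᵢ ^ p` satisfies
`F(1) = 1` and `F'(1) = (1/n) ∑ μᵢ log μᵢ = τ(f log f)`. Differentiating `F(p) ^ (1/p)` at `p = 1`,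
the term coming from the exponent carries the factor `log F(1) = 0`, so only `F'(1)` survives. -/

open Real Filter Topology

theorem Real.hasDerivAt_const_rpow_of_nonneg {a x : ℝ} (ha : 0 ≤ a) (hx : x ≠ 0) :
    HasDerivAt (fun p => a ^ p) (a ^ x * log a) x := by
  rcases ha.eq_or_lt with rfl | ha
  · have h_zero : (fun p : ℝ => (0 : ℝ) ^ p) =ᶠ[𝓝 x] fun _ => 0 := by
      filter_upwards [eventually_ne_nhds hx] with p hp using zero_rpow hp
    simpa using (hasDerivAt_const x (0 : ℝ)).congr_of_eventuallyEq h_zero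
  · exact (hasStrictDerivAt_const_rpow ha x).hasDerivAt

theorem HasDerivAt.rpow_one_div_of_eq_one {F : ℝ → ℝ} {F' : ℝ} (hF : HasDerivAt F F' 1)
    (h_one : F 1 = 1) : HasDerivAt (fun p => F p ^ (1 / p)) F' 1 := by
  have h_inv : HasDerivAt (fun p : ℝ => 1 / p) (-1) 1 := by
    simpa [one_div] using hasDerivAt_inv (one_ne_zero (α := ℝ))
  simpa [h_one] using hF.rpow h_inv (by rw [h_one]; exact one_pos)

/-- For a positive semidefinite `f ∈ M_n(ℂ)` with normalized trace
`τ(f) = tr(f)/n = 1`, the function `g(p) = ‖f‖_p = (τ(f^p))^{1/p}` (Schatten p-norm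
with respect to the normalized trace, computed spectrally) is differentiable at
`p = 1` with `g'(1) = τ(f log f)`. -/
theorem schattenNorm_hasDerivAt_one {n : ℕ} [NeZero n]
    (f : Matrix (Fin n) (Fin n) ℂ) (hf : f.PosSemidef)
    (htr : f.trace = (n : ℂ)) :
    HasDerivAt
      (fun p : ℝ => ((1 / (n : ℝ)) * ∑ i, hf.1.eigenvalues i ^ p) ^ (1 / p))
      ((1 / (n : ℝ)) * ∑ i, hf.1.eigenvalues i * Real.log (hf.1.eigenvalues i))
      1 := by
  set μ := hf.1.eigenvalues
  have h_sum : ∑ i, μ i = n := by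
    simpa using congrArg Complex.re (hf.1.trace_eq_sum_eigenvalues.symm.trans htr)
  have h_mean : HasDerivAt (fun p : ℝ => 1 / (n : ℝ) * ∑ i, μ i ^ p)
      (1 / (n : ℝ) * ∑ i, μ i * log (μ i)) 1 := by
    refine (HasDerivAt.fun_sum fun i _ => ?_).const_mul _
    simpa using hasDerivAt_const_rpow_of_nonneg (hf.eigenvalues_nonneg i) one_ne_zero
  refine h_mean.rpow_one_div_of_eq_one ?_
  simp [h_sum, NeZero.ne n]
end

section
/- Let M ⊂ M_m(ℂ) be a *-subalgebra containing the identity and B ∈ B(K, ℂ^m) a coisometry (BB* = id_K) for a finite-dimensional Hilbert space K such that MB = {yB : y ∈ M} is a subspace of the Hilbert–Schmidt operators from K to ℂ^m. Then the map P(T) = E_M(TB*)B, where E_M is the trace-preserving conditional expectation onto M, is the orthogonal projection from the Hilbert–Schmidt space HS(K, ℂ^m) onto the subspace MB. -/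
open Matrix
open scoped ComplexOrder

/-!
`E_M` fixes `M`: for `y ∈ M`, `E_M y - y` lies in `M` and is trace-orthogonal to `M`, in
particular to its own adjoint, so it vanishes. Since `BB* = 1`, the trace form satisfies
`tr((yB)* (xB)) = tr(x y*)` and `tr((yB)* T) = tr(TB* y*)`, so orthogonality of `T - E_M(TB*)B`
to `MB` is the defining property of `E_M` applied to `x = TB*`.
-/

section TraceForm

variable {R l m k : Type*} [Fintype l] [Fintype m] [Fintype k] [CommSemiring R] [StarRing R]

theorem Matrix.trace_conjTranspose_mul_mul_eq (y : Matrix l m R) (B : Matrix m k R)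
    (T : Matrix l k R) : ((y * B)ᴴ * T).trace = (T * Bᴴ * yᴴ).trace := by
  rw [conjTranspose_mul, Matrix.mul_assoc, trace_mul_comm, Matrix.mul_assoc, trace_mul_comm]

theorem Matrix.trace_conjTranspose_mul_mul_of_mul_conjTranspose_eq_one [DecidableEq m]
    {B : Matrix m k R} (hB : B * Bᴴ = 1) (y x : Matrix l m R) :
    ((y * B)ᴴ * (x * B)).trace = (x * yᴴ).trace := by
  rw [Matrix.trace_conjTranspose_mul_mul_eq, Matrix.mul_assoc x, hB, Matrix.mul_one]

end TraceForm

theorem StarSubalgebra.eq_of_forall_trace_mul_eq {n R : Type*} [Fintype n] [DecidableEq n]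
    [CommRing R] [PartialOrder R] [StarRing R] [StarOrderedRing R] [NoZeroDivisors R]
    {M : StarSubalgebra R (Matrix n n R)} {x y : Matrix n n R} (hx : x ∈ M) (hy : y ∈ M)
    (h : ∀ z ∈ M, (x * z).trace = (y * z).trace) : x = y := by
  have hxy : x - y ∈ M := sub_mem hx hy
  have hzero : ((x - y) * (x - y)ᴴ).trace = 0 := by
    rw [sub_mul, trace_sub, h (x - y)ᴴ (star_mem hxy), sub_self]
  exact sub_eq_zero.mp (trace_mul_conjTranspose_self_eq_zero_iff.mp hzero)

/-- Let `M ⊂ M_m(ℂ)` be a unital *-subalgebra and `B : K → ℂ^m` a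
coisometry (`BB* = id`) for a finite-dimensional Hilbert space `K = ℂ^k`, so that
`MB = {yB : y ∈ M}` is a subspace of the Hilbert–Schmidt operators from `K` to `ℂ^m`
(i.e. of `m × k` matrices). Let `E_M` be the trace-preserving conditional expectation
onto `M`, characterized by `E_M(x) ∈ M` and `tr(E_M(x) y) = tr(x y)` for all `y ∈ M`.
Then the map `P(T) = E_M(TB*)B` is the orthogonal projection from `HS(K, ℂ^m)` onto
the subspace `MB`: each `P(T)` lies in `MB`, `P` fixes `MB`, and `T − P(T)` is
orthogonal to `MB` in the Hilbert–Schmidt inner product `⟨S, T⟩ = tr(S*T)`. -/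
theorem condExp_comp_isometry_orthogonal_projection {m k : ℕ}
    (M : StarSubalgebra ℂ (Matrix (Fin m) (Fin m) ℂ))
    (E : Matrix (Fin m) (Fin m) ℂ →ₗ[ℂ] Matrix (Fin m) (Fin m) ℂ)
    (hEmem : ∀ x, E x ∈ M)
    (hEtr : ∀ x, ∀ y ∈ M, ((E x) * y).trace = (x * y).trace)
    (B : Matrix (Fin m) (Fin k) ℂ)
    (hB : B * Bᴴ = 1) :
    (∀ T : Matrix (Fin m) (Fin k) ℂ, ∃ y ∈ M, E (T * Bᴴ) * B = y * B) ∧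
    (∀ y ∈ M, E ((y * B) * Bᴴ) * B = y * B) ∧
    (∀ T : Matrix (Fin m) (Fin k) ℂ, ∀ y ∈ M,
      (((y * B)ᴴ) * (T - E (T * Bᴴ) * B)).trace = 0) := by
  have hfix : ∀ y ∈ M, E y = y := fun y hy =>
    StarSubalgebra.eq_of_forall_trace_mul_eq (hEmem y) hy (hEtr y)
  refine ⟨fun T => ⟨E (T * Bᴴ), hEmem _, rfl⟩, fun y hy => ?_, fun T y hy => ?_⟩
  · rw [Matrix.mul_assoc y, hB, Matrix.mul_one, hfix y hy]
  · rw [Matrix.mul_sub, trace_sub, trace_conjTranspose_mul_mul_eq,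
      trace_conjTranspose_mul_mul_of_mul_conjTranspose_eq_one hB, hEtr _ yᴴ (star_mem hy),
      sub_self]
end

section
/- Let Φ = id_m ⊗ tr_d : M_m(ℂ) ⊗ M_d(ℂ) → M_m(ℂ) be the partial trace channel. Then for every 1 ≤ p ≤ ∞ with 1/p + 1/p′ = 1, and every pure bipartite state ρ^{AA′} on H_A ⊗ (ℂ^m ⊗ ℂ^d), one has ‖(id_A ⊗ Φ)(ρ)‖_p ≤ m^{1/p′} ‖Φ(ρ^{A′})‖_p, and this constant is optimal: there is a pure state achieving equality. -/
open Matrix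
open scoped BigOperators ComplexOrder ENNReal

/-- Schatten `p`-norm of a Hermitian matrix (junk value `0` otherwise), computed
spectrally; `p = ∞` gives the operator norm (largest absolute eigenvalue). -/
noncomputable def sNorm (p : ℝ≥0∞) {ι : Type*} [Fintype ι] [DecidableEq ι]
    (ρ : Matrix ι ι ℂ) : ℝ :=
  if h : ρ.IsHermitian then
    (if p = ∞ then ⨆ i, |h.eigenvalues i|
     else (∑ i, |h.eigenvalues i| ^ p.toReal) ^ (1 / p.toReal))
  else 0

/-- The ampliation `id_r ⊗ Φ` of a map `Φ` between matrix algebras. -/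
def ampliate {r ι κ : Type*} (Φ : Matrix ι ι ℂ → Matrix κ κ ℂ)
    (X : Matrix (r × ι) (r × ι) ℂ) : Matrix (r × κ) (r × κ) ℂ :=
  fun p q => Φ (fun c d => X (p.1, c) (q.1, d)) p.2 q.2

/-- Partial trace over the (first) reference system. -/
noncomputable def ptraceRef {r ι : Type*} [Fintype r]
    (X : Matrix (r × ι) (r × ι) ℂ) : Matrix ι ι ℂ :=
  fun a b => ∑ i, X (i, a) (i, b)

/-- The partial trace channel `Φ = id_m ⊗ tr_d`. -/
noncomputable def ptrChannel {m d : ℕ}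
    (ρ : Matrix (Fin m × Fin d) (Fin m × Fin d) ℂ) : Matrix (Fin m) (Fin m) ℂ :=
  fun a b => ∑ j, ρ (a, j) (b, j)

/-!
Both sides are Schatten norms of positive semidefinite matrices with the same trace `‖ψ‖²`:
each is a partial trace of `ψψ*`. For such matrices `‖σ‖_p ≤ ‖σ‖_1 = tr σ`, and Hölder's
inequality against the identity gives `tr τ ≤ m^{1/p′} ‖τ‖_p`, which proves the bound. Equality
holds for a maximally entangled state between the reference system and `ℂ^m`: then
`(id_A ⊗ Φ)(ρ)` is a rank-one projection, of `p`-norm `1`, while `Φ(ρ^{A′}) = 1/m`, of `p`-norm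
`m^{1/p - 1}`.
-/

namespace PiLp

variable {ι : Type*} [Fintype ι] {p : ℝ≥0∞} {β : ι → Type*} [∀ i, SeminormedAddCommGroup (β i)]

theorem norm_le_sum_norm [Fact (1 ≤ p)] (x : PiLp p β) : ‖x‖ ≤ ∑ i, ‖x i‖ := by
  classical
  calc ‖x‖ = ‖∑ i, single p i (x i)‖ := by congr 1; ext j; simp
    _ ≤ ∑ i, ‖single p i (x i)‖ := norm_sum_le _ _
    _ = ∑ i, ‖x i‖ := by simp only [norm_single]

/-- Hölder's inequality against the constant vector `1`. -/
theorem sum_norm_le_card_rpow_mul_norm (hp : 1 ≤ p) (x : PiLp p β) :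
    ∑ i, ‖x i‖ ≤ (Fintype.card ι : ℝ) ^ (1 - 1 / p.toReal) * ‖x‖ := by
  have : Fact (1 ≤ p) := ⟨hp⟩
  rcases eq_or_ne p ∞ with rfl | hp_top
  · simpa using Finset.sum_le_sum fun i (_ : i ∈ Finset.univ) => norm_apply_le x i
  have ht : 1 ≤ p.toReal := ENNReal.toReal_mono hp_top hp |>.trans_eq' ENNReal.toReal_one.symm
  set t := p.toReal
  have ht0 : 0 < t := zero_lt_one.trans_le ht
  have hpow := Real.rpow_sum_le_const_mul_sum_rpow_of_nonneg Finset.univ ht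
    (f := fun i => ‖x i‖) fun i _ => norm_nonneg _
  rw [Finset.card_univ] at hpow
  rw [norm_eq_sum ht0]
  calc ∑ i, ‖x i‖ = ((∑ i, ‖x i‖) ^ t) ^ (1 / t) := by
        rw [← Real.rpow_mul (by positivity), mul_one_div_cancel ht0.ne', Real.rpow_one]
    _ ≤ ((Fintype.card ι : ℝ) ^ (t - 1) * ∑ i, ‖x i‖ ^ t) ^ (1 / t) := by gcongr
    _ = (Fintype.card ι : ℝ) ^ (1 - 1 / t) * (∑ i, ‖x i‖ ^ t) ^ (1 / t) := by
        rw [Real.mul_rpow (by positivity) (by positivity), ← Real.rpow_mul (by positivity)]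
        congr 2
        field_simp

end PiLp

theorem isIdempotentElem_vecMulVec_star {ι : Type*} [Fintype ι] {v : ι → ℂ}
    (hv : star v ⬝ᵥ v = 1) : IsIdempotentElem (vecMulVec v (star v)) := by
  ext i j
  simp only [mul_apply, vecMulVec_apply, Pi.star_apply]
  calc ∑ k, v i * star (v k) * (v k * star (v j)) = v i * (star v ⬝ᵥ v) * star (v j) := by
        simp only [dotProduct, Pi.star_apply, Finset.mul_sum, Finset.sum_mul]
        exact Finset.sum_congr rfl fun k _ => by ring
    _ = v i * star (v j) := by rw [hv, mul_one]

section sNorm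

variable {ι : Type*} [Fintype ι] [DecidableEq ι] {p : ℝ≥0∞} {A : Matrix ι ι ℂ}

theorem Matrix.IsHermitian.sNorm_eq_norm_eigenvalues (hA : A.IsHermitian) (hp : p ≠ 0) :
    sNorm p A = ‖WithLp.toLp p hA.eigenvalues‖ := by
  rw [sNorm, dif_pos hA]
  split_ifs with hp_top
  · subst hp_top
    simp [PiLp.norm_eq_ciSup]
  · rw [PiLp.norm_eq_sum (ENNReal.toReal_pos hp hp_top)]
    simp

theorem Matrix.IsHermitian.re_trace_le_card_rpow_mul_sNorm (hA : A.IsHermitian) (hp : 1 ≤ p) :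
    A.trace.re ≤ (Fintype.card ι : ℝ) ^ (1 - 1 / p.toReal) * sNorm p A := by
  rw [hA.sNorm_eq_norm_eigenvalues (zero_lt_one.trans_le hp).ne', hA.trace_eq_sum_eigenvalues]
  calc (∑ i, (hA.eigenvalues i : ℂ)).re = ∑ i, hA.eigenvalues i := by simp
    _ ≤ ∑ i, ‖hA.eigenvalues i‖ := Finset.sum_le_sum fun i _ => Real.le_norm_self _
    _ ≤ _ := PiLp.sum_norm_le_card_rpow_mul_norm hp (WithLp.toLp p hA.eigenvalues)

theorem Matrix.PosSemidef.sNorm_le_re_trace (hA : A.PosSemidef) (hp : 1 ≤ p) :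
    sNorm p A ≤ A.trace.re := by
  have : Fact (1 ≤ p) := ⟨hp⟩
  rw [hA.isHermitian.sNorm_eq_norm_eigenvalues (zero_lt_one.trans_le hp).ne',
    hA.isHermitian.trace_eq_sum_eigenvalues]
  calc _ ≤ ∑ i, ‖hA.isHermitian.eigenvalues i‖ := PiLp.norm_le_sum_norm _
    _ = _ := by simp [abs_of_nonneg (hA.eigenvalues_nonneg _)]

theorem Matrix.IsHermitian.one_le_sNorm_of_isIdempotentElem (hA : A.IsHermitian)
    (hidem : IsIdempotentElem A) (hA0 : A ≠ 0) (hp : 1 ≤ p) : 1 ≤ sNorm p A := by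
  have : Fact (1 ≤ p) := ⟨hp⟩
  obtain ⟨i, hi⟩ : ∃ i, hA.eigenvalues i ≠ 0 := by
    by_contra! h
    exact hA0 (hA.eigenvalues_eq_zero_iff.mp (funext h))
  have hi1 : hA.eigenvalues i = 1 :=
    (hidem.spectrum_subset ℝ (hA.eigenvalues_mem_spectrum_real i)).resolve_left hi
  rw [hA.sNorm_eq_norm_eigenvalues (zero_lt_one.trans_le hp).ne']
  simpa [hi1] using PiLp.norm_apply_le (WithLp.toLp p hA.eigenvalues) i

theorem sNorm_vecMulVec_star_of_star_dotProduct_eq_one {v : ι → ℂ} (hv : star v ⬝ᵥ v = 1)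
    (hp : 1 ≤ p) : sNorm p (vecMulVec v (star v)) = 1 := by
  have htr : (vecMulVec v (star v)).trace = 1 := by
    rw [trace_vecMulVec, dotProduct_comm, hv]
  have hpsd := posSemidef_vecMulVec_self_star v
  refine le_antisymm (by simpa [htr] using hpsd.sNorm_le_re_trace hp) ?_
  refine hpsd.isHermitian.one_le_sNorm_of_isIdempotentElem
    (isIdempotentElem_vecMulVec_star hv) ?_ hp
  intro h
  simp [h] at htr

theorem sNorm_smul_one [Nonempty ι] (hp : 1 ≤ p) (c : ℝ) :
    sNorm p (c • 1 : Matrix ι ι ℂ) = (Fintype.card ι : ℝ) ^ (1 / p.toReal) * |c| := by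
  have : Fact (1 ≤ p) := ⟨hp⟩
  have hc : (c • 1 : Matrix ι ι ℂ).IsHermitian := isHermitian_one.smul (IsSelfAdjoint.all c)
  have heig : hc.eigenvalues = Function.const ι c := by
    ext i
    simpa [← Algebra.algebraMap_eq_smul_one, spectrum.scalar_eq] using
      hc.eigenvalues_mem_spectrum_real i
  rw [hc.sNorm_eq_norm_eigenvalues (zero_lt_one.trans_le hp).ne', heig, PiLp.norm_toLp_const']
  simp

end sNorm

section trace

variable {r ι κ : Type*} [Fintype r] [Fintype ι] [Fintype κ]

theorem trace_ampliate {Φ : Matrix ι ι ℂ → Matrix κ κ ℂ} (hΦ : ∀ Y, (Φ Y).trace = Y.trace)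
    (X : Matrix (r × ι) (r × ι) ℂ) : (ampliate Φ X).trace = X.trace := by
  simp only [trace, diag, ampliate, Fintype.sum_prod_type]
  exact Finset.sum_congr rfl fun a _ => hΦ _

theorem trace_ptraceRef (X : Matrix (r × ι) (r × ι) ℂ) : (ptraceRef X).trace = X.trace := by
  simp only [trace, diag, ptraceRef, Fintype.sum_prod_type]
  exact Finset.sum_comm

theorem trace_ptrChannel {m d : ℕ} (ρ : Matrix (Fin m × Fin d) (Fin m × Fin d) ℂ) :
    (ptrChannel ρ).trace = ρ.trace := by
  simp only [trace, diag, ptrChannel, Fintype.sum_prod_type]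

end trace

section pure

variable {r : Type*} {m d : ℕ}

theorem ampliate_ptrChannel_vecMulVec (ψ : r × (Fin m × Fin d) → ℂ) :
    ampliate ptrChannel (vecMulVec ψ (star ψ)) =
      of (fun x j => ψ (x.1, (x.2, j))) * (of fun x j => ψ (x.1, (x.2, j)))ᴴ := by
  ext x y
  simp [ampliate, ptrChannel, vecMulVec_apply, mul_apply]

theorem ptrChannel_ptraceRef_vecMulVec [Fintype r] (ψ : r × (Fin m × Fin d) → ℂ) :
    ptrChannel (ptraceRef (vecMulVec ψ (star ψ))) =
      of (fun (i : Fin m) (q : r × Fin d) => ψ (q.1, (i, q.2))) *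
        (of fun (i : Fin m) (q : r × Fin d) => ψ (q.1, (i, q.2)))ᴴ := by
  ext i k
  simp only [ptrChannel, ptraceRef, vecMulVec_apply, mul_apply, conjTranspose_apply, of_apply,
    Fintype.sum_prod_type, Pi.star_apply]
  exact Finset.sum_comm

end pure

noncomputable def maxEntangledVec (m : ℕ) : Fin m × Fin m → ℂ :=
  fun y => if y.1 = y.2 then ((Real.sqrt m)⁻¹ : ℝ) else 0

/-- The maximally entangled state between the reference system and the `ℂ^m` factor, tensored
with the basis vector `e₀` of the traced-out factor `ℂ^d`. -/
noncomputable def maxEntangledState (m d : ℕ) [NeZero d] : Fin m × (Fin m × Fin d) → ℂ :=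
  fun x => if x.2.2 = 0 then maxEntangledVec m (x.1, x.2.1) else 0

section maxEntangled

variable {m d : ℕ} [NeZero d]

theorem star_maxEntangledVec_mul_self (a i : Fin m) :
    star (maxEntangledVec m (a, i)) * maxEntangledVec m (a, i) =
      if a = i then ((m : ℝ)⁻¹ : ℂ) else 0 := by
  unfold maxEntangledVec
  split_ifs <;> simp [← Complex.ofReal_mul, ← mul_inv]

theorem star_dotProduct_maxEntangledVec [NeZero m] :
    star (maxEntangledVec m) ⬝ᵥ maxEntangledVec m = 1 := by
  simp only [dotProduct, Fintype.sum_prod_type, Pi.star_apply, star_maxEntangledVec_mul_self,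
    Finset.sum_ite_eq, Finset.mem_univ, if_true, Finset.sum_const, Finset.card_univ,
    Fintype.card_fin, nsmul_eq_mul]
  push_cast
  exact mul_inv_cancel₀ (NeZero.ne _)

theorem sum_norm_sq_maxEntangledState [NeZero m] : ∑ x, ‖maxEntangledState m d x‖ ^ 2 = 1 := by
  have h := congrArg Complex.re (star_dotProduct_maxEntangledVec (m := m))
  simp only [dotProduct, Pi.star_apply, RCLike.star_def, Complex.conj_mul', Complex.one_re] at h
  norm_cast at h
  rw [← h]
  simp [Fintype.sum_prod_type, maxEntangledState, apply_ite (fun z : ℂ => ‖z‖ ^ 2)]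

theorem ampliate_ptrChannel_maxEntangledState :
    ampliate ptrChannel (vecMulVec (maxEntangledState m d) (star (maxEntangledState m d))) =
      vecMulVec (maxEntangledVec m) (star (maxEntangledVec m)) := by
  ext x y
  simp [ampliate, ptrChannel, vecMulVec_apply, maxEntangledState]

theorem ptrChannel_ptraceRef_maxEntangledState :
    ptrChannel (ptraceRef (vecMulVec (maxEntangledState m d) (star (maxEntangledState m d)))) =
      (m : ℝ)⁻¹ • (1 : Matrix (Fin m) (Fin m) ℂ) := by
  ext i k
  simp only [ptrChannel, ptraceRef, vecMulVec_apply, maxEntangledState, Pi.star_apply]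
  rw [Finset.sum_eq_single_of_mem 0 (Finset.mem_univ _) fun j _ hj => by simp [hj]]
  simp only [if_true, maxEntangledVec, ite_mul, zero_mul, Finset.sum_ite_eq', Finset.mem_univ,
    Matrix.smul_apply, one_apply]
  split_ifs <;> simp [← Complex.ofReal_mul, ← mul_inv]

end maxEntangled

/-- For the partial trace channel `Φ = id_m ⊗ tr_d`, for every
`1 ≤ p ≤ ∞` with `1/p + 1/p′ = 1` and every pure bipartite state `ρ = ψψ*` on
`H_A ⊗ (ℂ^m ⊗ ℂ^d)`, one has
`‖(id_A ⊗ Φ)(ρ)‖_p ≤ m^{1/p′} ‖Φ(ρ^{A′})‖_p`, and the constant `m^{1/p′}` is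
optimal: some pure state achieves equality. -/
theorem ptrChannel_schatten_bound {m d : ℕ} [NeZero m] [NeZero d]
    (p : ℝ≥0∞) (hp : 1 ≤ p) :
    (∀ (r : ℕ) (ψ : Fin r × (Fin m × Fin d) → ℂ), (∑ x, ‖ψ x‖ ^ 2 = 1) →
      sNorm p (ampliate ptrChannel (Matrix.vecMulVec ψ (star ψ)))
        ≤ (m : ℝ) ^ (1 - 1 / p.toReal) *
            sNorm p (ptrChannel (ptraceRef (Matrix.vecMulVec ψ (star ψ))))) ∧
    (∃ (r : ℕ) (ψ : Fin r × (Fin m × Fin d) → ℂ), (∑ x, ‖ψ x‖ ^ 2 = 1) ∧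
      sNorm p (ampliate ptrChannel (Matrix.vecMulVec ψ (star ψ)))
        = (m : ℝ) ^ (1 - 1 / p.toReal) *
            sNorm p (ptrChannel (ptraceRef (Matrix.vecMulVec ψ (star ψ))))) := by
  refine ⟨fun r ψ _ => ?_, m, maxEntangledState m d, sum_norm_sq_maxEntangledState, ?_⟩
  · have hσ := ampliate_ptrChannel_vecMulVec ψ ▸ posSemidef_self_mul_conjTranspose _
    have hτ := ptrChannel_ptraceRef_vecMulVec ψ ▸ posSemidef_self_mul_conjTranspose _
    calc _ ≤ (ampliate ptrChannel (vecMulVec ψ (star ψ))).trace.re :=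
          hσ.sNorm_le_re_trace hp
      _ = (ptrChannel (ptraceRef (vecMulVec ψ (star ψ)))).trace.re := by
          rw [trace_ampliate trace_ptrChannel, trace_ptrChannel, trace_ptraceRef]
      _ ≤ _ := by simpa using hτ.isHermitian.re_trace_le_card_rpow_mul_sNorm hp
  · have hm : (0 : ℝ) < m := Nat.cast_pos.mpr (NeZero.pos m)
    rw [ampliate_ptrChannel_maxEntangledState, ptrChannel_ptraceRef_maxEntangledState,
      sNorm_vecMulVec_star_of_star_dotProduct_eq_one star_dotProduct_maxEntangledVec hp,
      sNorm_smul_one hp, Fintype.card_fin, abs_of_pos (inv_pos.mpr hm), ← mul_assoc,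
      ← Real.rpow_add hm, sub_add_cancel, Real.rpow_one, mul_inv_cancel₀ hm.ne']
end

section
/- Under the assumptions of the comparison setting (M ⊂ M_m standard inclusion, U = Σ_i x_i⊗y_i unitary with x_i ∈ M′, y_i ∈ N, and B = Σ_i |x_i⟩⟨y_i*| satisfying BB* = id), for every density f ∈ N one has θ₁ ∘ θ_f = θ₁; equivalently, E_M(B f B*) = 1, i.e., tr(x B f B*) = tr(x) for all x ∈ M. -/
/-!
Write `c^g_{ij} = τ(y_i g y_j*)`. Contracting the identity `U*U = 1` on `1 ⊗ f` with the trace of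
`N` gives `Σ_{ij} c^f_{ij} x_i′ x_j′* = τ(f) = 1`. In both conclusions the inner sum over `a, b` is
`BB*` applied to an element of `M`, so it collapses by `BB* = 1`, and what remains is
`Σ_{ij} c^f_{ij} x_i′ x_j′* = 1` sandwiched between elements of `M`.
-/

open Matrix
open scoped BigOperators ComplexOrder TensorProduct

/-- The operator `B = Σ_i |x_i⟩⟨y_i*| : L₂(N) → L₂(M)`,
`B|a⟩ = Σ_i τ(y_i a)|x_i′⟩` (with `τ = tr/n` the normalized trace on `N`). -/
noncomputable def Bop {m n s : ℕ}
    (x' : Fin s → Matrix (Fin m) (Fin m) ℂ)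
    (y : Fin s → Matrix (Fin n) (Fin n) ℂ)
    (a : Matrix (Fin n) (Fin n) ℂ) : Matrix (Fin m) (Fin m) ℂ :=
  ∑ i, ((y i * a).trace / (n : ℂ)) • x' i

/-- The adjoint `B* : L₂(M) → L₂(N)`, `B*|h⟩ = Σ_j tr(x_j′* h)|y_j*⟩`. -/
noncomputable def Bstarop {m n s : ℕ}
    (x' : Fin s → Matrix (Fin m) (Fin m) ℂ)
    (y : Fin s → Matrix (Fin n) (Fin n) ℂ)
    (h : Matrix (Fin m) (Fin m) ℂ) : Matrix (Fin n) (Fin n) ℂ :=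
  ∑ j, (((x' j)ᴴ * h).trace) • (y j)ᴴ

theorem Finset.sum_sum_sum_sum_comm {ι κ β : Type*} [Fintype ι] [Fintype κ] [AddCommMonoid β]
    (F : ι → ι → κ → κ → β) :
    ∑ a, ∑ b, ∑ i, ∑ j, F a b i j = ∑ i, ∑ j, ∑ a, ∑ b, F a b i j := by
  simpa only [Fintype.sum_prod_type] using Finset.sum_comm (s := Finset.univ) (t := Finset.univ)
    (f := fun (p : ι × ι) (q : κ × κ) => F p.1 p.2 q.1 q.2)

section Bop

variable {m n s : ℕ} (x' : Fin s → Matrix (Fin m) (Fin m) ℂ) (y : Fin s → Matrix (Fin n) (Fin n) ℂ)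

theorem Bop_mul_Bstarop (a : Matrix (Fin n) (Fin n) ℂ) (h : Matrix (Fin m) (Fin m) ℂ) :
    Bop x' y (a * Bstarop x' y h) =
      ∑ i, ∑ j, ((y i * a * (y j)ᴴ).trace / n * ((x' j)ᴴ * h).trace) • x' i := by
  simp only [Bop, Bstarop, Finset.mul_sum, mul_smul_comm, trace_sum, trace_smul, smul_eq_mul,
    Finset.sum_div, Finset.sum_smul, mul_assoc]
  refine Finset.sum_congr rfl fun i _ => Finset.sum_congr rfl fun j _ => ?_
  congr 1
  ring

theorem Bop_Bstarop (h : Matrix (Fin m) (Fin m) ℂ) :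
    Bop x' y (Bstarop x' y h) =
      ∑ i, ∑ j, ((y i * (y j)ᴴ).trace / n * ((x' j)ᴴ * h).trace) • x' i := by
  simpa only [one_mul, mul_one] using Bop_mul_Bstarop x' y 1 h

theorem mul_Bop_Bstarop (p h : Matrix (Fin m) (Fin m) ℂ) :
    p * Bop x' y (Bstarop x' y h) =
      ∑ i, ∑ j, ((y i * (y j)ᴴ).trace / n * ((x' j)ᴴ * h).trace) • (p * x' i) := by
  simp only [Bop_Bstarop, Finset.mul_sum, mul_smul_comm]

theorem sum_coeff_smul_mul_conjTranspose_of_unitary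
    (hU : ∀ (h : Matrix (Fin m) (Fin m) ℂ) (a : Matrix (Fin n) (Fin n) ℂ),
      ∑ i, ∑ j, (h * x' i * (x' j)ᴴ) ⊗ₜ[ℂ] ((y j)ᴴ * y i * a) = h ⊗ₜ[ℂ] a)
    (a : Matrix (Fin n) (Fin n) ℂ) :
    ∑ i, ∑ j, ((y i * a * (y j)ᴴ).trace / n) • (x' i * (x' j)ᴴ) = (a.trace / n) • 1 := by
  have h := congrArg ((TensorProduct.rid ℂ _).toLinearMap ∘ₗ (traceLinearMap (Fin n) ℂ ℂ).lTensor _)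
    (hU 1 a)
  simp only [map_sum, LinearMap.comp_apply, LinearEquiv.coe_coe, LinearMap.lTensor_tmul,
    traceLinearMap_apply, TensorProduct.rid_tmul, one_mul] at h
  rw [div_eq_inv_mul, mul_smul, ← h, Finset.smul_sum]
  refine Finset.sum_congr rfl fun i _ => ?_
  rw [Finset.smul_sum]
  refine Finset.sum_congr rfl fun j _ => ?_
  rw [div_eq_inv_mul, mul_smul, trace_mul_comm, ← mul_assoc]

variable {M : StarSubalgebra ℂ (Matrix (Fin m) (Fin m) ℂ)} {f : Matrix (Fin n) (Fin n) ℂ}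

theorem sum_smul_mul_eq_mul_of_Bop_Bstarop (hBB : ∀ w ∈ M, Bop x' y (Bstarop x' y w) = w)
    (p : Matrix (Fin m) (Fin m) ℂ) {w : Matrix (Fin m) (Fin m) ℂ} (hw : w ∈ M) :
    ∑ a, ∑ b, ((y a * (y b)ᴴ).trace / n * ((x' b)ᴴ * w).trace) • (p * x' a) = p * w := by
  rw [← mul_Bop_Bstarop, hBB w hw]

theorem theta_one_comp_theta_rankOne_apply (hx : ∀ i, x' i ∈ M)
    (hBB : ∀ w ∈ M, Bop x' y (Bstarop x' y w) = w)
    (hK : ∑ i, ∑ j, ((y i * f * (y j)ᴴ).trace / n) • (x' i * (x' j)ᴴ) = 1)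
    (k : Matrix (Fin m) (Fin m) ℂ) {h z : Matrix (Fin m) (Fin m) ℂ} (hh : h ∈ M) (hz : z ∈ M) :
    ∑ i, ∑ j, ∑ a, ∑ b,
        (((y i * f * (y j)ᴴ).trace / (n : ℂ)) * ((y a * (y b)ᴴ).trace / (n : ℂ)) *
          ((h * x' j * x' b)ᴴ * z).trace) • (k * x' i * x' a)
      = ∑ a, ∑ b,
          (((y a * (y b)ᴴ).trace / (n : ℂ)) * ((h * x' b)ᴴ * z).trace) • (k * x' a) := by
  have hhz : hᴴ * z ∈ M := mul_mem (star_mem hh) hz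
  have hxhz (j : Fin s) : (x' j)ᴴ * (hᴴ * z) ∈ M := mul_mem (star_mem (hx j)) hhz
  calc _ = ∑ i, ∑ j, ((y i * f * (y j)ᴴ).trace / n) • ∑ a, ∑ b,
          ((y a * (y b)ᴴ).trace / n * ((x' b)ᴴ * ((x' j)ᴴ * (hᴴ * z))).trace) •
            (k * x' i * x' a) := by
        simp only [Finset.smul_sum, smul_smul, conjTranspose_mul, mul_assoc]
    _ = ∑ i, ∑ j, ((y i * f * (y j)ᴴ).trace / n) • (k * x' i * ((x' j)ᴴ * (hᴴ * z))) := by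
        simp only [sum_smul_mul_eq_mul_of_Bop_Bstarop x' y hBB _ (hxhz _)]
    _ = k * (∑ i, ∑ j, ((y i * f * (y j)ᴴ).trace / n) • (x' i * (x' j)ᴴ)) * (hᴴ * z) := by
        simp only [Finset.mul_sum, Finset.sum_mul, mul_smul_comm, smul_mul_assoc, mul_assoc]
    _ = _ := by
        rw [hK, mul_one, ← sum_smul_mul_eq_mul_of_Bop_Bstarop x' y hBB k hhz]
        simp only [conjTranspose_mul, mul_assoc]

theorem theta_one_Bop_mul_Bstarop_eq_self (hx : ∀ i, x' i ∈ M)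
    (hBB : ∀ w ∈ M, Bop x' y (Bstarop x' y w) = w)
    (hK : ∑ i, ∑ j, ((y i * f * (y j)ᴴ).trace / n) • (x' i * (x' j)ᴴ) = 1)
    {z : Matrix (Fin m) (Fin m) ℂ} (hz : z ∈ M) :
    ∑ a, ∑ b, (((y a * (y b)ᴴ).trace / (n : ℂ)) •
        ((Bop x' y (f * Bstarop x' y (z * (x' b)ᴴ))) * x' a)) = z := by
  have hxz (j : Fin s) : (x' j)ᴴ * z ∈ M := mul_mem (star_mem (hx j)) hz
  calc _ = ∑ a, ∑ b, ∑ i, ∑ j, ((y i * f * (y j)ᴴ).trace / n) •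
          (((y a * (y b)ᴴ).trace / n * ((x' b)ᴴ * ((x' j)ᴴ * z)).trace) • (x' i * x' a)) := by
        simp only [Bop_mul_Bstarop, Finset.sum_mul, Finset.smul_sum, smul_mul_assoc, smul_smul]
        refine Finset.sum_congr rfl fun a _ => Finset.sum_congr rfl fun b _ =>
          Finset.sum_congr rfl fun i _ => Finset.sum_congr rfl fun j _ => ?_
        rw [← mul_assoc (x' j)ᴴ z, trace_mul_comm ((x' j)ᴴ * z)]
        congr 1
        ring
    _ = ∑ i, ∑ j, ((y i * f * (y j)ᴴ).trace / n) • (x' i * ((x' j)ᴴ * z)) := by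
        simp only [Finset.sum_sum_sum_sum_comm, ← Finset.smul_sum,
          sum_smul_mul_eq_mul_of_Bop_Bstarop x' y hBB _ (hxz _)]
    _ = (∑ i, ∑ j, ((y i * f * (y j)ᴴ).trace / n) • (x' i * (x' j)ᴴ)) * z := by
        simp only [Finset.sum_mul, smul_mul_assoc, mul_assoc]
    _ = z := by rw [hK, one_mul]

end Bop

theorem theta_one_comp_theta_f_general {m n s : ℕ} [NeZero n]
    (M : StarSubalgebra ℂ (Matrix (Fin m) (Fin m) ℂ))
    (x' : Fin s → Matrix (Fin m) (Fin m) ℂ)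
    (y : Fin s → Matrix (Fin n) (Fin n) ℂ)
    (hx : ∀ i, x' i ∈ M)
    (hB : ∀ h ∈ M,
      ∑ i, ∑ j, (((y i * (y j)ᴴ).trace / (n : ℂ)) * ((x' j)ᴴ * h).trace) • x' i = h)
    (hU : ∀ (h : Matrix (Fin m) (Fin m) ℂ) (a : Matrix (Fin n) (Fin n) ℂ),
      ∑ i, ∑ j, (h * x' i * (x' j)ᴴ) ⊗ₜ[ℂ] ((y j)ᴴ * y i * a) = h ⊗ₜ[ℂ] a)
    (f : Matrix (Fin n) (Fin n) ℂ) (htrf : f.trace = (n : ℂ)) :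
    (∀ k ∈ M, ∀ h ∈ M, ∀ z ∈ M,
      ∑ i, ∑ j, ∑ a, ∑ b,
        (((y i * f * (y j)ᴴ).trace / (n : ℂ)) * ((y a * (y b)ᴴ).trace / (n : ℂ)) *
          ((h * x' j * x' b)ᴴ * z).trace) • (k * x' i * x' a)
        = ∑ a, ∑ b,
            (((y a * (y b)ᴴ).trace / (n : ℂ)) * ((h * x' b)ᴴ * z).trace) • (k * x' a)) ∧
    (∀ z ∈ M,
      ∑ a, ∑ b, (((y a * (y b)ᴴ).trace / (n : ℂ)) •
          ((Bop x' y (f * Bstarop x' y (z * (x' b)ᴴ))) * x' a)) = z) := by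
  have hBB : ∀ w ∈ M, Bop x' y (Bstarop x' y w) = w := fun w hw =>
    (Bop_Bstarop x' y w).trans (hB w hw)
  have hK : ∑ i, ∑ j, ((y i * f * (y j)ᴴ).trace / n) • (x' i * (x' j)ᴴ) = 1 := by
    rw [sum_coeff_smul_mul_conjTranspose_of_unitary x' y hU, htrf,
      div_self (NeZero.ne (n : ℂ)), one_smul]
  exact ⟨fun k _ h hh z hz => theta_one_comp_theta_rankOne_apply x' y hx hBB hK k hh hz,
    fun z hz => theta_one_Bop_mul_Bstarop_eq_self x' y hx hBB hK hz⟩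

/-- In the comparison setting — `M ⊂ M_m(ℂ)` a standardly included
*-subalgebra acting on `L₂(M) = M` by left multiplication, `U = Σ_i x_i ⊗ y_i` a
unitary with `x_i ∈ M′` right multiplication by `x_i′ ∈ M` and `y_i ∈ N = M_n(ℂ)`
acting on `L₂(N)` by left multiplication (hypothesis `hU`: `U*U = id`, expressed on
elementary tensors), and `B = Σ_i |x_i⟩⟨y_i*|` satisfying `BB* = id_{L₂(M)}`
(hypothesis `hB`) — for every density `f ∈ N` one has `θ₁ ∘ θ_f = θ₁`
(conclusion (1), on rank-one operators `|k⟩⟨h|` evaluated at vectors `z ∈ L₂(M)`,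
where `c^g_{ij} = τ(y_i g y_j*)` are the coefficients of `θ_g`); equivalently
`E_M(BfB*) = 1` (conclusion (2): the conditional expectation `θ₁ = E_M` applied to
the operator `BfB*` on `L₂(M)` is the identity), i.e. `tr(x BfB*) = tr(x)`
for all `x ∈ M`. -/
theorem theta_one_comp_theta_f {m n s : ℕ} [NeZero n]
    (M : StarSubalgebra ℂ (Matrix (Fin m) (Fin m) ℂ))
    (x' : Fin s → Matrix (Fin m) (Fin m) ℂ)
    (y : Fin s → Matrix (Fin n) (Fin n) ℂ)
    (hx : ∀ i, x' i ∈ M)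
    (hB : ∀ h ∈ M,
      ∑ i, ∑ j, (((y i * (y j)ᴴ).trace / (n : ℂ)) * ((x' j)ᴴ * h).trace) • x' i = h)
    (hU : ∀ (h : Matrix (Fin m) (Fin m) ℂ) (a : Matrix (Fin n) (Fin n) ℂ),
      ∑ i, ∑ j, (h * x' i * (x' j)ᴴ) ⊗ₜ[ℂ] ((y j)ᴴ * y i * a) = h ⊗ₜ[ℂ] a)
    (f : Matrix (Fin n) (Fin n) ℂ) (hf : f.PosSemidef) (htrf : f.trace = (n : ℂ)) :
    (∀ k ∈ M, ∀ h ∈ M, ∀ z ∈ M,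
      ∑ i, ∑ j, ∑ a, ∑ b,
        (((y i * f * (y j)ᴴ).trace / (n : ℂ)) * ((y a * (y b)ᴴ).trace / (n : ℂ)) *
          ((h * x' j * x' b)ᴴ * z).trace) • (k * x' i * x' a)
        = ∑ a, ∑ b,
            (((y a * (y b)ᴴ).trace / (n : ℂ)) * ((h * x' b)ᴴ * z).trace) • (k * x' a)) ∧
    (∀ z ∈ M,
      ∑ a, ∑ b, (((y a * (y b)ᴴ).trace / (n : ℂ)) •
          ((Bop x' y (f * Bstarop x' y (z * (x' b)ᴴ))) * x' a)) = z) :=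
  theta_one_comp_theta_f_general M x' y hx hB hU f htrf
end
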